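/- arXiv:2004.14141 — 3 statements merged into one kernel-verified Lean document; each statement's English description precedes it below -/
import Mathlib

section
/- Let Γ be a split extension of Λ by a nilpotent bimodule E. Then the composition Hom_Γ(Λ_Γ, Hom_Λ(Γ_Λ, -)) is naturally isomorphic to the identity functor on mod Λ. -/
open CategoryTheory CategoryTheory.Limits

universe u

theorem coextend_up_then_down_iso_id
    {k : Type u} [Field k] {Λ Γ : Type u} [Ring Λ] [Ring Γ]
    [Algebra k Λ] [Algebra k Γ] [FiniteDimensional k Λ] [FiniteDimensional k Γ]
    (π : Γ →ₐ[k] Λ) (σ : Λ →ₐ[k] Γ)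
    (hsplit : π.comp σ = AlgHom.id k Λ)
    (hrad : RingHom.ker π.toRingHom ≤ Ideal.jacobson (⊥ : Ideal Γ)) :
    Nonempty (ModuleCat.coextendScalars σ.toRingHom ⋙
        ModuleCat.coextendScalars π.toRingHom ≅ 𝟭 (ModuleCat.{u} Λ)) := by
  have h : RingHom.id Λ = π.toRingHom.comp σ.toRingHom := by
    ext x
    exact (congrArg (fun f => f x) hsplit).symm
  have adj : ModuleCat.restrictScalars π.toRingHom ⋙ ModuleCat.restrictScalars σ.toRingHom ⊣
      ModuleCat.coextendScalars σ.toRingHom ⋙ ModuleCat.coextendScalars π.toRingHom :=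
    (ModuleCat.restrictCoextendScalarsAdj π.toRingHom).comp
      (ModuleCat.restrictCoextendScalarsAdj σ.toRingHom)
  have iso : ModuleCat.restrictScalars π.toRingHom ⋙ ModuleCat.restrictScalars σ.toRingHom ≅
      𝟭 (ModuleCat.{u} Λ) :=
    (ModuleCat.restrictScalarsComp' σ.toRingHom π.toRingHom (RingHom.id Λ) h).symm ≪≫
      ModuleCat.restrictScalarsId Λ
  exact ⟨(adj.ofNatIsoLeft iso).rightAdjointUniq Adjunction.id⟩
end

section
/- Let Γ be a split extension of Λ by a nilpotent bimodule E, and T a finitely generated right Λ-module. Then T ⊗_Λ Γ is a τ-tilting Γ-module if and only if T is a τ-tilting Λ-module and Hom_Λ(T ⊗_Λ E, τT) = 0. -/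
/-!
Background definitions.

We work with left modules over finite-dimensional algebras (the mirror of the
right-module conventions of the paper).  Since Mathlib has no Auslander–Reiten
theory, the AR translate `τ` is taken as a parameter, together with its
characteristic properties (e.g. `τ(T ⊗_Λ Γ) ≅ Hom_Λ(Γ, τT)`) as hypotheses.
The functor `- ⊗_Λ Γ` is characterized (uniquely up to isomorphism) as a left
adjoint of the restriction-of-scalars functor along the section `σ : Λ → Γ`,
and `Hom_Λ(Γ, -)` is `ModuleCat.coextendScalars`.
-/

open CategoryTheory CategoryTheory.Limits

universe u

section Defs
variable {A : Type u} [Ring A]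

/-- `Hom(M, N) = 0` in the module category. -/
def HomZero (M N : ModuleCat.{u} A) : Prop := ∀ f : M ⟶ N, f = 0

/-- `X` is a direct summand of `M`. -/
def IsSummand (X M : ModuleCat.{u} A) : Prop :=
  ∃ (i : X ⟶ M) (r : M ⟶ X), i ≫ r = 𝟙 X

/-- `X` is an indecomposable (nonzero) module. -/
def Indec (X : ModuleCat.{u} A) : Prop :=
  ¬ IsZero X ∧ ∀ Y Z : ModuleCat.{u} A, Nonempty (X ≅ Y ⊞ Z) → IsZero Y ∨ IsZero Z

/-- The set of isomorphism classes of indecomposable direct summands of `M`. -/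
def indecClasses (M : ModuleCat.{u} A) :
    Set (Quotient (CategoryTheory.isIsomorphicSetoid (ModuleCat.{u} A))) :=
  {q | ∃ X : ModuleCat.{u} A, Quotient.mk _ X = q ∧ Indec X ∧ IsSummand X M}

/-- `|M|`: the number of isomorphism classes of indecomposable direct summands of `M`. -/
noncomputable def numIndec (M : ModuleCat.{u} A) : ℕ := Set.ncard (indecClasses M)

/-- `M` is τ-rigid with respect to a given AR translate `τ`. -/
def TauRigid (τ : ModuleCat.{u} A → ModuleCat.{u} A) (M : ModuleCat.{u} A) : Prop :=
  HomZero M (τ M)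

/-- `(M, P)` is a support τ-tilting pair (with respect to the AR translate `τ`). -/
def SuppTauTiltPair (τ : ModuleCat.{u} A → ModuleCat.{u} A) (M P : ModuleCat.{u} A) : Prop :=
  TauRigid τ M ∧ HomZero P M ∧ numIndec M + numIndec P = numIndec (ModuleCat.of A A)

/-- `M` is a τ-tilting module. -/
def TauTilting (τ : ModuleCat.{u} A → ModuleCat.{u} A) (M : ModuleCat.{u} A) : Prop :=
  TauRigid τ M ∧ numIndec M = numIndec (ModuleCat.of A A)

/-- `M` is a support τ-tilting module. -/
def SuppTauTilting (τ : ModuleCat.{u} A → ModuleCat.{u} A) (M : ModuleCat.{u} A) : Prop :=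
  ∃ P : ModuleCat.{u} A, Projective P ∧ SuppTauTiltPair τ M P

/-- `X ∈ Fac U`: `X` is a quotient of a finite direct sum of copies of `U`. -/
def InFac (X U : ModuleCat.{u} A) : Prop :=
  ∃ (n : ℕ) (f : ModuleCat.of A (Fin n → U) ⟶ X), Epi f

/-- `X ∈ add U`: `X` is a direct summand of a finite direct sum of copies of `U`. -/
def InAdd (X U : ModuleCat.{u} A) : Prop :=
  ∃ n : ℕ, IsSummand X (ModuleCat.of A (Fin n → U))

end Defs

/-!
STATEMENT 10 (Corollary 3.2).  Let `Γ` be a split extension of `Λ` by a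
nilpotent bimodule `E = ker π`, with `F = - ⊗_Λ Γ`, AR translates `τΛ`, `τΓ`
related by `τ(X ⊗_Λ Γ) ≅ Hom_Λ(Γ_Λ, τX)`, `|X ⊗_Λ Γ| = |X|` and `|Γ| = |Λ|`,
and `TE` in the role of `T ⊗_Λ E`.  Then `T ⊗_Λ Γ` is a τ-tilting `Γ`-module
iff `T` is a τ-tilting `Λ`-module and `Hom_Λ(T ⊗_Λ E, τT) = 0`.
-/

lemma homZero_iff_subsingleton {A : Type u} [Ring A] (M N : ModuleCat.{u} A) :
    HomZero M N ↔ Subsingleton (M ⟶ N) := by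
  constructor
  · intro h; exact ⟨fun f g => (h f).trans (h g).symm⟩
  · intro h f; exact Subsingleton.elim f 0

lemma homZero_biprod_iff {A : Type u} [Ring A] (X Y N : ModuleCat.{u} A) :
    HomZero (X ⊞ Y) N ↔ HomZero X N ∧ HomZero Y N := by
  constructor
  · intro h
    constructor
    · intro f
      have : biprod.inl ≫ biprod.desc f (0 : Y ⟶ N) = f := by simp
      rw [← this, h (biprod.desc f 0)]; simp
    · intro f
      have : biprod.inr ≫ biprod.desc (0 : X ⟶ N) f = f := by simp
      rw [← this, h (biprod.desc 0 f)]; simp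
  · rintro ⟨h1, h2⟩ f
    have : biprod.desc (biprod.inl ≫ f) (biprod.inr ≫ f) = f := by
      apply biprod.hom_ext' <;> simp
    rw [← this, h1 (biprod.inl ≫ f), h2 (biprod.inr ≫ f)]
    apply biprod.hom_ext' <;> simp

theorem tauTilting_tensor_iff
    {k : Type u} [Field k] {Λ Γ : Type u} [Ring Λ] [Ring Γ]
    [Algebra k Λ] [Algebra k Γ] [FiniteDimensional k Λ] [FiniteDimensional k Γ]
    (π : Γ →ₐ[k] Λ) (σ : Λ →ₐ[k] Γ)
    (hsplit : π.comp σ = AlgHom.id k Λ)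
    (hrad : RingHom.ker π.toRingHom ≤ Ideal.jacobson (⊥ : Ideal Γ))
    (F : ModuleCat.{u} Λ ⥤ ModuleCat.{u} Γ)
    (adjF : F ⊣ ModuleCat.restrictScalars σ.toRingHom)
    (τΛ : ModuleCat.{u} Λ → ModuleCat.{u} Λ)
    (τΓ : ModuleCat.{u} Γ → ModuleCat.{u} Γ)
    (hτ : ∀ X : ModuleCat.{u} Λ,
      Nonempty (τΓ (F.obj X) ≅ (ModuleCat.coextendScalars σ.toRingHom).obj (τΛ X)))
    (hcount : ∀ X : ModuleCat.{u} Λ, numIndec (F.obj X) = numIndec X)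
    (hΓΛ : numIndec (ModuleCat.of Γ Γ) = numIndec (ModuleCat.of Λ Λ))
    (T TE : ModuleCat.{u} Λ) [Module.Finite Λ T]
    (hTE : Nonempty ((ModuleCat.restrictScalars σ.toRingHom).obj (F.obj T) ≅ T ⊞ TE)) :
    TauTilting τΓ (F.obj T) ↔ TauTilting τΛ T ∧ HomZero TE (τΛ T) := by
  obtain ⟨eτ⟩ := hτ T
  obtain ⟨eT⟩ := hTE
  have adj2 := ModuleCat.restrictCoextendScalarsAdj.{u, u, u} σ.toRingHom
  have e1 : (F.obj T ⟶ τΓ (F.obj T)) ≃ ((T ⊞ TE) ⟶ τΛ T) :=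
    (Iso.homCongr (Iso.refl _) eτ).trans <|
      ((adj2.homEquiv _ _).symm).trans (Iso.homCongr eT (Iso.refl _))
  have hrigid : TauRigid τΓ (F.obj T) ↔ (HomZero T (τΛ T) ∧ HomZero TE (τΛ T)) := by
    rw [← homZero_biprod_iff]
    unfold TauRigid
    rw [homZero_iff_subsingleton, homZero_iff_subsingleton]
    exact ⟨fun h => e1.symm.subsingleton, fun h => e1.subsingleton⟩
  constructor
  · rintro ⟨h1, h2⟩
    obtain ⟨hT, hTE'⟩ := hrigid.mp h1
    refine ⟨⟨hT, ?_⟩, hTE'⟩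
    rw [← hcount T, h2, hΓΛ]
  · rintro ⟨⟨hT, hn⟩, hTE'⟩
    refine ⟨hrigid.mpr ⟨hT, hTE'⟩, ?_⟩
    rw [hcount T, hn, hΓΛ]
end

section
/- Let Γ be a split extension of Λ by a nilpotent bimodule E, and suppose T₁, T₂ are Λ-modules such that T₁ ⊗_Λ Γ and T₂ ⊗_Λ Γ are support τ-tilting Γ-modules. If X is an indecomposable Λ-module and U a Λ-module with T₂ = X ⊕ U, then X ∈ Fac U if and only if X ⊗_Λ Γ ∈ Fac(U ⊗_Λ Γ). -/
/-!
Background definitions.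

We work with left modules over finite-dimensional algebras (the mirror of the
right-module conventions of the paper).  Since Mathlib has no Auslander–Reiten
theory, the AR translate `τ` is taken as a parameter, together with its
characteristic properties (e.g. `τ(T ⊗_Λ Γ) ≅ Hom_Λ(Γ, τT)`) as hypotheses.
The functor `- ⊗_Λ Γ` is characterized (uniquely up to isomorphism) as a left
adjoint of the restriction-of-scalars functor along the section `σ : Λ → Γ`,
and `Hom_Λ(Γ, -)` is `ModuleCat.coextendScalars`.
-/

open CategoryTheory CategoryTheory.Limits

universe u

/-!
STATEMENT 15 (key step of Theorem 3.10).  Let `Γ` be a split extension of `Λ`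
by a nilpotent bimodule `E = ker π`, with `F = - ⊗_Λ Γ`, `G = - ⊗_Γ Λ`, and
`F ⋙ G ≅ 𝟭` on `mod Λ`.  Suppose `T₁ ⊗_Λ Γ` and `T₂ ⊗_Λ Γ` are support
τ-tilting `Γ`-modules, `X` is an indecomposable `Λ`-module, and `T₂ = X ⊕ U`.
Then `X ∈ Fac U` iff `X ⊗_Λ Γ ∈ Fac (U ⊗_Λ Γ)`.
-/


section Aux
open CategoryTheory CategoryTheory.Limits

lemma infac_congr {A : Type u} [Ring A] {X X' U U' : ModuleCat.{u} A}
    (eX : X ≅ X') (eU : U ≅ U') (h : InFac X U) : InFac X' U' := by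
  obtain ⟨n, f, hf⟩ := h
  refine ⟨n, ((LinearEquiv.piCongrRight fun _ : Fin n =>
      eU.symm.toLinearEquiv).toModuleIso).hom ≫ f ≫ eX.hom, ?_⟩
  infer_instance

lemma infac_map {A B : Type u} [Ring A] [Ring B]
    {F : ModuleCat.{u} A ⥤ ModuleCat.{u} B} {R : ModuleCat.{u} B ⥤ ModuleCat.{u} A}
    (adj : F ⊣ R) {X U : ModuleCat.{u} A} (h : InFac X U) :
    InFac (F.obj X) (F.obj U) := by
  obtain ⟨n, f, hf⟩ := h
  have h1 : PreservesColimits F := adj.leftAdjoint_preservesColimits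
  have h2 : F.IsLeftAdjoint := ⟨R, ⟨adj⟩⟩
  have hb : PreservesBiproduct (fun _ : Fin n => U) F :=
    preservesBiproduct_of_preservesCoproduct F
  have e : ModuleCat.of B (Fin n → F.obj U) ≅ F.obj (ModuleCat.of A (Fin n → U)) :=
    (ModuleCat.biproductIsoPi (fun _ : Fin n => F.obj U)).symm ≪≫
      (F.mapBiproduct (fun _ : Fin n => U)).symm ≪≫
      F.mapIso (ModuleCat.biproductIsoPi (fun _ : Fin n => U))
  have : Epi (F.map f) := F.map_epi f
  exact ⟨n, e.hom ≫ F.map f, inferInstance⟩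

end Aux

theorem fac_iff_fac_tensor
    {k : Type u} [Field k] {Λ Γ : Type u} [Ring Λ] [Ring Γ]
    [Algebra k Λ] [Algebra k Γ] [FiniteDimensional k Λ] [FiniteDimensional k Γ]
    (π : Γ →ₐ[k] Λ) (σ : Λ →ₐ[k] Γ)
    (hsplit : π.comp σ = AlgHom.id k Λ)
    (hrad : RingHom.ker π.toRingHom ≤ Ideal.jacobson (⊥ : Ideal Γ))
    (F : ModuleCat.{u} Λ ⥤ ModuleCat.{u} Γ)
    (G : ModuleCat.{u} Γ ⥤ ModuleCat.{u} Λ)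
    (adjF : F ⊣ ModuleCat.restrictScalars σ.toRingHom)
    (adjG : G ⊣ ModuleCat.restrictScalars π.toRingHom)
    (hGF : Nonempty (F ⋙ G ≅ 𝟭 (ModuleCat.{u} Λ)))
    (τΓ : ModuleCat.{u} Γ → ModuleCat.{u} Γ)
    (T₁ T₂ X U : ModuleCat.{u} Λ)
    [Module.Finite Λ T₁] [Module.Finite Λ T₂]
    (h₁ : SuppTauTilting τΓ (F.obj T₁))
    (h₂ : SuppTauTilting τΓ (F.obj T₂))
    (hX : Indec X)
    (hdec : Nonempty (T₂ ≅ X ⊞ U)) :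
    InFac X U ↔ InFac (F.obj X) (F.obj U) := by
  constructor
  · exact infac_map adjF
  · intro h
    have h' := infac_map adjG h
    exact infac_congr (hGF.some.app X) (hGF.some.app U) h'
end
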